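/- arXiv:2411.05467 — 3 statements merged into one kernel-verified Lean document; each statement's English description precedes it below -/
import Mathlib

section
/- Consider a commutative square of functors with p : A₀ → A₁ and q : B₀ → B₁ localization functors, f₀ : A₀ → B₀ and f₁ : A₁ → B₁ admitting right adjoints f₀^R and f₁^R. If there exists some natural isomorphism p ∘ f₀^R ≅ f₁^R ∘ q, then the Beck–Chevalley (mate) transformation p ∘ f₀^R → f₁^R ∘ q associated to the commuting square is itself an isomorphism. -/
/-!
An isomorphism `g₀ ⋙ p ≅ q ⋙ g₁` shows that `g₀ ⋙ p` inverts `Wq`, so `g₀` descends to a functor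
`g₀' : B₁ ⥤ A₁`, and `f₀ ⊣ g₀` descends to an adjunction `f₁ ⊣ g₀'` for which the mate of the
square is the descent isomorphism `g₀ ⋙ p ≅ q ⋙ g₀'`. The mate for `f₁ ⊣ g₁` is this one followed
by the conjugate isomorphism `g₀' ≅ g₁` between two right adjoints of `f₁`.
-/

open CategoryTheory Functor

namespace CategoryTheory.Adjunction

variable {C₁ C₂ D₁ D₂ : Type*} [Category C₁] [Category C₂] [Category D₁] [Category D₂]
  {G : C₁ ⥤ C₂} {F : C₂ ⥤ C₁} (adj : G ⊣ F)
  (L₁ : C₁ ⥤ D₁) (L₂ : C₂ ⥤ D₂) (W₂ : MorphismProperty C₂) [L₂.IsLocalization W₂]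
  (G' : D₁ ⥤ D₂) [CatCommSq G L₁ L₂ G']

lemma mateEquiv_localization (W₁ : MorphismProperty C₁) [L₁.IsLocalization W₁]
    (F' : D₂ ⥤ D₁) [CatCommSq F L₂ L₁ F'] :
    mateEquiv adj (adj.localization L₁ W₁ L₂ W₂ G' F') (CatCommSq.iso G L₁ L₂ G').inv =
      (CatCommSq.iso F L₂ L₁ F').hom := by
  ext X₂
  have hnat := (CatCommSq.iso F L₂ L₁ F').hom.naturality (adj.counit.app X₂)
  dsimp at hnat
  simp only [mateEquiv, Equiv.coe_fn_mk, NatTrans.comp_app, comp_obj, id_obj, rightUnitor_inv_app,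
    whiskerLeft_app, localization_unit_app, associator_hom_app, associator_inv_app,
    whiskerRight_app, Functor.comp_map, leftUnitor_hom_app, Category.comp_id, Category.id_comp,
    Category.assoc, cancelIso]
  rw [← hnat, ← L₁.map_comp_assoc, right_triangle_components, L₁.map_id, Category.id_comp]

lemma isIso_mateEquiv_of_isInvertedBy (W₁ : MorphismProperty C₁) [L₁.IsLocalization W₁]
    {F' : D₂ ⥤ D₁} (adj' : G' ⊣ F') (hF : W₂.IsInvertedBy (F ⋙ L₁)) :
    IsIso (mateEquiv adj adj' (CatCommSq.iso G L₁ L₂ G').inv).natTrans := by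
  let F'' := Localization.lift _ hF L₂
  let : CatCommSq F L₂ L₁ F'' := ⟨(Localization.fac _ hF L₂).symm⟩
  have hcomp := mateEquiv_conjugateEquiv_vcomp adj (adj.localization L₁ W₁ L₂ W₂ G' F'') adj'
    (CatCommSq.iso G L₁ L₂ G').inv (𝟙 G')
  have hid : TwoSquare.whiskerRight (CatCommSq.iso G L₁ L₂ G').inv (𝟙 G') =
      (CatCommSq.iso G L₁ L₂ G').inv := by
    ext; simp [TwoSquare.whiskerRight]
  rw [hid, mateEquiv_localization] at hcomp
  rw [hcomp]
  dsimp only [TwoSquare.whiskerBottom]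
  infer_instance

end CategoryTheory.Adjunction

/-- Given a commutative square `e : f₀ ⋙ q ≅ p ⋙ f₁` with `p, q` Dwyer-Kan
localizations and `f₀ ⊣ g₀`, `f₁ ⊣ g₁`, if there exists some isomorphism
`g₀ ⋙ p ≅ q ⋙ g₁`, then the Beck-Chevalley (mate) transformation
`p ∘ g₀ ⟶ g₁ ∘ q` is an isomorphism. -/
theorem beck_chevalley_of_exists_iso
    {A₀ A₁ B₀ B₁ : Type*} [Category A₀] [Category A₁] [Category B₀] [Category B₁]
    (p : A₀ ⥤ A₁) (q : B₀ ⥤ B₁)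
    (Wp : MorphismProperty A₀) (Wq : MorphismProperty B₀)
    [p.IsLocalization Wp] [q.IsLocalization Wq]
    (f₀ : A₀ ⥤ B₀) (f₁ : A₁ ⥤ B₁) (g₀ : B₀ ⥤ A₀) (g₁ : B₁ ⥤ A₁)
    (adj₀ : f₀ ⊣ g₀) (adj₁ : f₁ ⊣ g₁)
    (e : f₀ ⋙ q ≅ p ⋙ f₁)
    (h : Nonempty (g₀ ⋙ p ≅ q ⋙ g₁)) :
    ∀ b : B₀, IsIso (adj₁.unit.app (p.obj (g₀.obj b)) ≫
      g₁.map (e.inv.app (g₀.obj b)) ≫ g₁.map (q.map (adj₀.counit.app b))) := by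
  obtain ⟨h⟩ := h
  let : CatCommSq f₀ p q f₁ := ⟨e⟩
  have hinv : Wq.IsInvertedBy (g₀ ⋙ p) :=
    (MorphismProperty.IsInvertedBy.iff_of_iso Wq h).2
      (MorphismProperty.IsInvertedBy.of_comp Wq q (Localization.inverts q Wq) g₁)
  have := adj₀.isIso_mateEquiv_of_isInvertedBy p q Wq f₁ Wp adj₁ hinv
  intro b
  have hb : (mateEquiv adj₀ adj₁ e.inv).natTrans.app b = adj₁.unit.app (p.obj (g₀.obj b)) ≫
      g₁.map (e.inv.app (g₀.obj b)) ≫ g₁.map (q.map (adj₀.counit.app b)) := by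
    simp [mateEquiv]
  rw [← hb]
  infer_instance
end

section
/- If the unit object of D is κ-compact for a regular cardinal κ, then every D-atomic object of any D-module M is κ-compact in M. -/
/-! Since `m ≅ 𝟙 ⊗ m` and `(− ⊗ m) ⊣ hom_M(m, −)`, the functor `Hom_M(m, −)` is
`Hom_D(𝟙, −) ∘ hom_M(m, −)`: a colimit-preserving functor followed by one that preserves
`κ`-filtered colimits. -/

open CategoryTheory CategoryTheory.MonoidalCategory CategoryTheory.Limits

universe v u

variable {D : Type u} [Category.{v} D] [MonoidalCategory D]

/-- The projection map `d ⊗ hom_M(m, m') ⟶ hom_M(m, d ⊗ m')` for a `D`-module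
category `M` with internal homs `homM` right adjoint to the action functors. -/
noncomputable def projHom {M : Type u} [Category.{v} M]
    (actM : D ⥤ M ⥤ M)
    (assocM : ∀ (d d' : D) (m : M),
      (actM.obj (d ⊗ d')).obj m ≅ (actM.obj d).obj ((actM.obj d').obj m))
    (homM : M → (M ⥤ D)) (adjM : ∀ m : M, actM.flip.obj m ⊣ homM m)
    (m : M) (d : D) (m' : M) :
    d ⊗ (homM m).obj m' ⟶ (homM m).obj ((actM.obj d).obj m') :=
  ((adjM m).homEquiv _ _)
    ((assocM d ((homM m).obj m') m).hom ≫ (actM.obj d).map ((adjM m).counit.app m'))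

/-- An object `m` of a `D`-module category `M` is `D`-atomic if `hom_M(m, −)`
preserves colimits and all projection maps are isomorphisms. -/
def IsAtomicObj {M : Type u} [Category.{v} M]
    (actM : D ⥤ M ⥤ M)
    (assocM : ∀ (d d' : D) (m : M),
      (actM.obj (d ⊗ d')).obj m ≅ (actM.obj d).obj ((actM.obj d').obj m))
    (homM : M → (M ⥤ D)) (adjM : ∀ m : M, actM.flip.obj m ⊣ homM m)
    (m : M) : Prop :=
  Nonempty (PreservesColimits (homM m)) ∧
    ∀ (d : D) (m' : M), IsIso (projHom actM assocM homM adjM m d m')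

/-- A category `J` is `κ`-filtered if every diagram with fewer than `κ` arrows
admits a cocone. -/
def IsCardFiltered (J : Type v) [SmallCategory J] (κ : Cardinal.{v}) : Prop :=
  ∀ (K : Type v) [SmallCategory K],
    Cardinal.mk ((a : K) × (b : K) × (a ⟶ b)) < κ →
      ∀ F : K ⥤ J, Nonempty (Limits.Cocone F)

/-- An object `x` is `κ`-compact if `Hom(x, −)` preserves colimits of `κ`-filtered
shape. -/
def IsKappaCompactObj {C : Type u} [Category.{v} C] (κ : Cardinal.{v}) (x : C) : Prop :=
  ∀ (J : Type v) [SmallCategory J], IsCardFiltered J κ →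
    Nonempty (PreservesColimitsOfShape J (coyoneda.obj (Opposite.op x)))

universe u₁ u₂

theorem IsKappaCompactObj.of_iso {C : Type u₁} [Category.{v} C] {κ : Cardinal.{v}} {x y : C}
    (e : x ≅ y) (hx : IsKappaCompactObj κ x) : IsKappaCompactObj κ y := by
  intro J _ hJ
  obtain ⟨_⟩ := hx J hJ
  exact ⟨preservesColimitsOfShape_of_natIso (coyoneda.mapIso e.op).symm⟩

theorem CategoryTheory.Adjunction.isKappaCompactObj_obj {C : Type u₁} {E : Type u₂}
    [Category.{v} C] [Category.{v} E] {F : C ⥤ E} {G : E ⥤ C} (adj : F ⊣ G) [PreservesColimits G]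
    {κ : Cardinal.{v}} {x : C} (hx : IsKappaCompactObj κ x) : IsKappaCompactObj κ (F.obj x) := by
  intro J _ hJ
  obtain ⟨_⟩ := hx J hJ
  let e : coyoneda.obj (Opposite.op (F.obj x)) ≅ G ⋙ coyoneda.obj (Opposite.op x) :=
    adj.compCoyonedaIso.app (Opposite.op x)
  exact ⟨preservesColimitsOfShape_of_natIso e.symm⟩

theorem atomic_implies_kappaCompact_general
    {M : Type u} [Category.{v} M]
    (actM : D ⥤ M ⥤ M)
    (assocM : ∀ (d d' : D) (m : M),
      (actM.obj (d ⊗ d')).obj m ≅ (actM.obj d).obj ((actM.obj d').obj m))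
    (unitM : ∀ m : M, (actM.obj (𝟙_ D)).obj m ≅ m)
    (homM : M → (M ⥤ D)) (adjM : ∀ m : M, actM.flip.obj m ⊣ homM m)
    (κ : Cardinal.{v})
    (hunit : IsKappaCompactObj κ (𝟙_ D))
    (m : M) (hm : IsAtomicObj actM assocM homM adjM m) :
    IsKappaCompactObj κ m := by
  obtain ⟨⟨_⟩, -⟩ := hm
  exact ((adjM m).isKappaCompactObj_obj hunit).of_iso (unitM m)

/-- If the unit object of `D` is `κ`-compact for a regular cardinal `κ`, then every
`D`-atomic object of a `D`-module category `M` is `κ`-compact in `M`. -/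
theorem atomic_implies_kappaCompact
    {M : Type u} [Category.{v} M]
    (actM : D ⥤ M ⥤ M)
    (assocM : ∀ (d d' : D) (m : M),
      (actM.obj (d ⊗ d')).obj m ≅ (actM.obj d).obj ((actM.obj d').obj m))
    (unitM : ∀ m : M, (actM.obj (𝟙_ D)).obj m ≅ m)
    (homM : M → (M ⥤ D)) (adjM : ∀ m : M, actM.flip.obj m ⊣ homM m)
    (κ : Cardinal.{v}) (hκ : κ.IsRegular)
    (hunit : IsKappaCompactObj κ (𝟙_ D))
    (m : M) (hm : IsAtomicObj actM assocM homM adjM m) :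
    IsKappaCompactObj κ m :=
  atomic_implies_kappaCompact_general actM assocM unitM homM adjM κ hunit m hm
end

section
/- Let C be compactly generated by dualizable objects and K a set of compact objects. Every dualizable K-torsion object of C is K-complete, and is moreover dualizable in the category C^{K-cpl} of K-complete objects (with its symmetric monoidal structure induced by the completion functor Λ). -/
open CategoryTheory CategoryTheory.MonoidalCategory CategoryTheory.Limits

universe v u

/-- An object is compact if mapping out of it commutes with filtered colimits. -/
def IsCompactObj {C : Type u} [Category.{v} C] (x : C) : Prop :=
  ∀ (J : Type v) [SmallCategory J] [IsFiltered J],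
    Nonempty (PreservesColimitsOfShape J (coyoneda.obj (Opposite.op x)))

/-- An object of a monoidal category is dualizable if it is part of an exact pairing. -/
def IsDualizableObj {C : Type u} [Category.{v} C] [MonoidalCategory C] (x : C) : Prop :=
  ∃ y : C, Nonempty (ExactPairing x y)

/-- A class of objects is closed under colimits. -/
def ColimClosed {C : Type u} [Category.{v} C] (P : Set C) : Prop :=
  ∀ (J : Type v) [SmallCategory J] (F : J ⥤ C) (c : Cocone F),
    IsColimit c → (∀ j, F.obj j ∈ P) → c.pt ∈ P

/-- The localizing tensor ideal generated by `K`: the smallest class containing `K`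
closed under colimits and tensoring with arbitrary objects. -/
def TorsionSet {C : Type u} [Category.{v} C] [MonoidalCategory C] (K : Set C) : Set C :=
  {x | ∀ P : Set C, ColimClosed P → (∀ d y : C, y ∈ P → (d ⊗ y) ∈ P) → K ⊆ P → x ∈ P}

/-- The `K`-local objects: right orthogonal to the `K`-torsion objects. -/
def LocalSet {C : Type u} [Category.{v} C] [MonoidalCategory C] [HasZeroMorphisms C]
    (K : Set C) : Set C :=
  {x | ∀ t ∈ TorsionSet K, ∀ g : t ⟶ x, g = 0}

/-- The `K`-complete objects: right orthogonal to the `K`-local objects. -/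
def CompleteSet {C : Type u} [Category.{v} C] [MonoidalCategory C] [HasZeroMorphisms C]
    (K : Set C) : Set C :=
  {x | ∀ l ∈ LocalSet K, ∀ g : l ⟶ x, g = 0}

/-!
A dualizable torsion object `x` with dual `y` is complete. For a local `l`, the object
`x ⊗ (y ⊗ l)` is torsion because `x` is and torsion objects form a tensor ideal; it is also
local, since maps `t ⟶ a ⊗ l` correspond to maps `b ⊗ t ⟶ l` for an exact pairing `(a, b)`
and `b ⊗ t` is again torsion. So its identity is zero, and every `g : l ⟶ x` factors through it
by the zigzag identity. Being complete, `x` is isomorphic to `Λ x` via the counit, and the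
strong monoidal functor `Λ` carries the exact pairing of `x` and `y`.
-/

namespace CategoryTheory

open Functor.LaxMonoidal Functor.OplaxMonoidal Functor.Monoidal in
noncomputable abbrev Functor.mapExactPairing {C D : Type*} [Category C] [Category D]
    [MonoidalCategory C] [MonoidalCategory D] (F : C ⥤ D) [F.Monoidal] (X Y : C)
    [ExactPairing X Y] : ExactPairing (F.obj X) (F.obj Y) where
  coevaluation' := ε F ≫ F.map (η_ X Y) ≫ δ F X Y
  evaluation' := μ F Y X ≫ F.map (ε_ X Y) ≫ η F
  -- `F` of a zigzag identity is the zigzag identity of the images, up to the invertible `μ`, `δ`.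
  coevaluation_evaluation' := by
    have H := F.congr_map (ExactPairing.coevaluation_evaluation X Y)
    simp only [F.map_comp, map_whiskerLeft, map_whiskerRight, map_associator_inv,
      map_rightUnitor, map_leftUnitor_inv, Category.assoc, μ_δ_assoc, cancel_epi] at H
    simp only [← Category.assoc] at H
    replace H := (cancel_mono (μ F (𝟙_ C) Y)).1 H
    simp only [MonoidalCategory.whiskerLeft_comp, comp_whiskerRight, Category.assoc] at H ⊢
    rw [reassoc_of% H]
    simp
  evaluation_coevaluation' := by
    have H := F.congr_map (ExactPairing.evaluation_coevaluation X Y)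
    simp only [F.map_comp, map_whiskerLeft, map_whiskerRight, map_associator,
      map_leftUnitor, map_rightUnitor_inv, Category.assoc, μ_δ_assoc, cancel_epi] at H
    simp only [← Category.assoc] at H
    replace H := (cancel_mono (μ F X (𝟙_ C))).1 H
    simp only [MonoidalCategory.whiskerLeft_comp, comp_whiskerRight, Category.assoc] at H ⊢
    rw [reassoc_of% H]
    simp

end CategoryTheory

section Dualizable

variable {C : Type*} [Category C] [MonoidalCategory C]

theorem IsDualizableObj.map {D : Type*} [Category D] [MonoidalCategory D] (F : C ⥤ D)
    [F.Monoidal] {x : C} (hx : IsDualizableObj x) : IsDualizableObj (F.obj x) := by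
  obtain ⟨y, ⟨_⟩⟩ := hx
  exact ⟨F.obj y, ⟨F.mapExactPairing x y⟩⟩

theorem IsDualizableObj.of_iso {x x' : C} (e : x ≅ x') (hx' : IsDualizableObj x') :
    IsDualizableObj x := by
  obtain ⟨y, ⟨_⟩⟩ := hx'
  exact ⟨y, ⟨exactPairingCongrLeft e⟩⟩

end Dualizable

section Torsion

variable {C : Type u} [Category.{v} C]

theorem ColimClosed.mem_of_iso {P : Set C} (hP : ColimClosed P) {a b : C} (e : a ≅ b)
    (ha : a ∈ P) : b ∈ P := by
  refine hP (Discrete PUnit.{v+1}) ((Functor.const _).obj a)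
    ⟨b, ⟨fun _ => e.hom, by intros; simp⟩⟩
    ⟨fun s => e.inv ≫ s.ι.app ⟨PUnit.unit⟩, ?_, ?_⟩ (fun _ => ha)
  · rintro s ⟨⟨⟩⟩
    simp
  · intro s m hm
    simpa using e.inv ≫= hm ⟨PUnit.unit⟩

variable [MonoidalCategory C] {K : Set C}

theorem tensor_mem_torsionSet_left (d : C) {t : C} (ht : t ∈ TorsionSet K) :
    d ⊗ t ∈ TorsionSet K :=
  fun P hP hP_tensor hKP => hP_tensor d t (ht P hP hP_tensor hKP)

theorem mem_torsionSet_of_iso {a b : C} (e : a ≅ b) (ha : a ∈ TorsionSet K) :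
    b ∈ TorsionSet K :=
  fun P hP hP_tensor hKP => hP.mem_of_iso e (ha P hP hP_tensor hKP)

theorem tensor_mem_torsionSet_right [BraidedCategory C] {t : C} (ht : t ∈ TorsionSet K)
    (d : C) : t ⊗ d ∈ TorsionSet K :=
  mem_torsionSet_of_iso (β_ d t) (tensor_mem_torsionSet_left d ht)

variable [HasZeroMorphisms C]

theorem tensor_mem_localSet (a b : C) {l : C} [ExactPairing a b] (hl : l ∈ LocalSet K) :
    a ⊗ l ∈ LocalSet K := by
  intro t ht g
  have hbt := tensor_mem_torsionSet_left b ht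
  have : Subsingleton (b ⊗ t ⟶ l) := ⟨fun f f' => (hl _ hbt f).trans (hl _ hbt f').symm⟩
  exact (tensorLeftHomEquiv t a b l).symm.injective (Subsingleton.elim _ _)

theorem IsDualizableObj.mem_completeSet [BraidedCategory C] {x : C} (hxd : IsDualizableObj x)
    (hxt : x ∈ TorsionSet K) : x ∈ CompleteSet K := by
  obtain ⟨y, ⟨_⟩⟩ := hxd
  let : ExactPairing y x := BraidedCategory.exactPairing_swap x y
  intro l hl g
  have hid : 𝟙 (x ⊗ (y ⊗ l)) = 0 :=
    tensor_mem_localSet x y (tensor_mem_localSet y x hl) _ (tensor_mem_torsionSet_right hxt _) _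
  have hzigzag : (λ_ l).inv ≫ η_ x y ▷ l ≫ (α_ x y l).hom ≫ x ◁ (y ◁ g) ≫
      x ◁ ε_ x y ≫ (ρ_ x).hom = g := by
    rw [← associator_naturality_right_assoc, ← whisker_exchange_assoc,
      ← leftUnitor_inv_naturality_assoc, ExactPairing.evaluation_coevaluation_assoc]
    simp
  rw [← hzigzag, ← Category.id_comp (x ◁ (y ◁ g)), hid]
  simp

end Torsion

theorem dualizable_torsion_is_complete_and_dualizable_general
    {C : Type u} [Category.{v} C] [MonoidalCategory C] [SymmetricCategory C]
    [HasZeroMorphisms C]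
    (K : Set C)
    [MonoidalCategory (ObjectProperty.FullSubcategory (fun y : C => y ∈ CompleteSet K))]
    (Λ : C ⥤ ObjectProperty.FullSubcategory (fun y : C => y ∈ CompleteSet K)) [Λ.Monoidal]
    (adjΛ : Λ ⊣ ObjectProperty.ι (fun y : C => y ∈ CompleteSet K))
    (x : C) (hxd : IsDualizableObj x) (hxt : x ∈ TorsionSet K) :
    ∃ hx : x ∈ CompleteSet K,
      IsDualizableObj (C := ObjectProperty.FullSubcategory (fun y : C => y ∈ CompleteSet K)) ⟨x, hx⟩ := by
  have hx : x ∈ CompleteSet K := hxd.mem_completeSet hxt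
  exact ⟨hx, (hxd.map Λ).of_iso (asIso (adjΛ.counit.app ⟨x, hx⟩)).symm⟩

/-- Let `C` be compactly generated by dualizable objects and `K` a set of compact
objects. Every dualizable `K`-torsion object of `C` is `K`-complete, and is moreover
dualizable in the category of `K`-complete objects with its symmetric monoidal
structure induced by the completion functor `Λ`. -/
theorem dualizable_torsion_is_complete_and_dualizable
    {C : Type u} [Category.{v} C] [MonoidalCategory C] [SymmetricCategory C]
    [HasZeroMorphisms C]
    (hgen : ∃ G : Set C, (∀ g ∈ G, IsCompactObj g ∧ IsDualizableObj g) ∧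
      ∀ (x : C) (P : Set C), ColimClosed P → G ⊆ P → x ∈ P)
    (K : Set C) (hK : ∀ k ∈ K, IsCompactObj k)
    [MonoidalCategory (ObjectProperty.FullSubcategory (fun y : C => y ∈ CompleteSet K))]
    (Λ : C ⥤ ObjectProperty.FullSubcategory (fun y : C => y ∈ CompleteSet K)) [Λ.Monoidal]
    (adjΛ : Λ ⊣ ObjectProperty.ι (fun y : C => y ∈ CompleteSet K))
    (x : C) (hxd : IsDualizableObj x) (hxt : x ∈ TorsionSet K) :
    ∃ hx : x ∈ CompleteSet K,
      IsDualizableObj (C := ObjectProperty.FullSubcategory (fun y : C => y ∈ CompleteSet K)) ⟨x, hx⟩ :=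
  dualizable_torsion_is_complete_and_dualizable_general K Λ adjΛ x hxd hxt
end
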